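/- Let q ∈ ℂ with q^{2k} ≠ 1 for 1 ≤ k ≤ ℓ. Then for all 0 ≤ m, n ≤ ℓ: ⟨ℓ,m|| (~||ℓ,n⟩) = δ_{m,n}, and ~⟨ℓ,n|| (~||ℓ,n⟩) = ([ℓ¦n]_q / C(ℓ,n))². -/

import Mathlib

/-!
The bras and the tilde kets with index `n` are supported on the configurations with `n` ones,
so the pairings vanish for `m ≠ n`; for `m = n` the prefactors of `⟨ℓ,n||` and `~||ℓ,n⟩`
cancel termwise, leaving `C(ℓ,n)` summands equal to `C(ℓ,n)⁻¹`. The pairing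
`~⟨ℓ,n|| ~||ℓ,n⟩` reduces to the generating function `∑_{|S| = n} q^{-2Σ(S)}` of the
`n`-subsets of `{1,…,ℓ}`, which equals `q^{-n(ℓ+1)} [ℓ¦n]_q`: after rescaling, both sides
obey the q-Pascal rule `[ℓ+1¦n+1]_q = q^{n+1} [ℓ¦n+1]_q + q^{-(ℓ-n)} [ℓ¦n]_q`, which comes
from `[a+b]_q = q^b [a]_q + q^{-a} [b]_q`.
-/

open Matrix Complex Finset Filter

noncomputable section

/-- q-integer `[n]_q = (q^n - q^{-n})/(q - q⁻¹)`. -/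
def qint (q : ℂ) (n : ℕ) : ℂ := (q ^ n - q⁻¹ ^ n) / (q - q⁻¹)

/-- q-factorial `[n]_q!`. -/
def qfact (q : ℂ) (n : ℕ) : ℂ := ∏ k ∈ Finset.range n, qint q (k + 1)

/-- q-binomial coefficient `[m ¦ n]_q`. -/
def qbinom (q : ℂ) (m n : ℕ) : ℂ := qfact q m / (qfact q (m - n) * qfact q n)

/-- The set of positions where the configuration `c` equals `1`. -/
def oneSet {m : ℕ} (c : Fin m → Fin 2) : Finset (Fin m) :=
  Finset.univ.filter fun i => c i = 1

/-- The exponent `Σ(S) − n m + n(n−1)/2` (positions counted `1,…,m`). -/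
def expKet (m n : ℕ) (S : Finset (Fin m)) : ℤ :=
  (∑ i ∈ S, ((i : ℤ) + 1)) - (n : ℤ) * (m : ℤ) + ((n * (n - 1) / 2 : ℕ) : ℤ)

/-- Coefficients of the ket `||m, n⟩` in the standard basis. -/
def ketCoef (q : ℂ) (m n : ℕ) (c : Fin m → Fin 2) : ℂ :=
  if (oneSet c).card = n then q ^ expKet m n (oneSet c) else 0

/-- Coefficients of the bra `⟨m, n||` in the standard (bilinear) dual basis. -/
def braCoef (q : ℂ) (m n : ℕ) (c : Fin m → Fin 2) : ℂ :=
  (qbinom q m n)⁻¹ * q ^ ((n : ℤ) * ((m : ℤ) - (n : ℤ))) * ketCoef q m n c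

/-- Coefficients of the tilde bra `~⟨m, n||`. -/
def tbraCoef (q : ℂ) (m n : ℕ) (c : Fin m → Fin 2) : ℂ :=
  ((m.choose n : ℂ))⁻¹ *
    (if (oneSet c).card = n then q ^ (-(expKet m n (oneSet c))) else 0)

/-- Coefficients of the tilde ket `~||m, n⟩`. -/
def tketCoef (q : ℂ) (m n : ℕ) (c : Fin m → Fin 2) : ℂ :=
  qbinom q m n * q ^ (-((n : ℤ) * ((m : ℤ) - (n : ℤ)))) * ((m.choose n : ℂ))⁻¹ *
    (if (oneSet c).card = n then q ^ (-(expKet m n (oneSet c))) else 0)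

lemma qint_add (q : ℂ) (a b : ℕ) :
    qint q (a + b) = q ^ b * qint q a + q⁻¹ ^ a * qint q b := by
  simp only [qint, mul_div_assoc', ← add_div]
  ring

lemma pow_sub_inv_pow_ne_zero {K : Type*} [Field K] {q : K} (hq0 : q ≠ 0) {k : ℕ}
    (hk : q ^ (2 * k) ≠ 1) : q ^ k - q⁻¹ ^ k ≠ 0 := by
  intro h
  apply hk
  rw [two_mul, pow_add]
  nth_rewrite 2 [sub_eq_zero.1 h]
  rw [← mul_pow, mul_inv_cancel₀ hq0, one_pow]

lemma qfact_zero (q : ℂ) : qfact q 0 = 1 := prod_range_zero _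

lemma qfact_succ (q : ℂ) (n : ℕ) : qfact q (n + 1) = qfact q n * qint q (n + 1) :=
  prod_range_succ _ _

lemma qfact_ne_zero {q : ℂ} (hq0 : q ≠ 0) {m : ℕ}
    (hq : ∀ k : ℕ, 1 ≤ k → k ≤ m → q ^ (2 * k) ≠ 1) : qfact q m ≠ 0 := by
  refine prod_ne_zero_iff.2 fun k hk => ?_
  have hk := mem_range.1 hk
  have hq1 : q - q⁻¹ ≠ 0 := by
    simpa using pow_sub_inv_pow_ne_zero hq0 (k := 1) (by simpa using hq 1 le_rfl (by omega))
  exact div_ne_zero (pow_sub_inv_pow_ne_zero hq0 (hq (k + 1) (by omega) hk)) hq1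

lemma qfact_ne_zero_of_le {q : ℂ} {m n : ℕ} (hm : qfact q m ≠ 0) (hn : n ≤ m) :
    qfact q n ≠ 0 :=
  prod_ne_zero_iff.2 fun k hk => prod_ne_zero_iff.1 hm k (range_subset_range.2 hn hk)

lemma qint_ne_zero_of_le {q : ℂ} {m k : ℕ} (hm : qfact q m ≠ 0) (hk : k + 1 ≤ m) :
    qint q (k + 1) ≠ 0 :=
  prod_ne_zero_iff.1 hm k (mem_range.2 hk)

lemma qbinom_ne_zero {q : ℂ} {m n : ℕ} (hm : qfact q m ≠ 0) (hn : n ≤ m) :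
    qbinom q m n ≠ 0 :=
  div_ne_zero hm (mul_ne_zero (qfact_ne_zero_of_le hm (m.sub_le n)) (qfact_ne_zero_of_le hm hn))

lemma qbinom_zero_right {q : ℂ} {m : ℕ} (hm : qfact q m ≠ 0) : qbinom q m 0 = 1 := by
  rw [qbinom, Nat.sub_zero, qfact_zero, mul_one, div_self hm]

lemma qbinom_self {q : ℂ} {m : ℕ} (hm : qfact q m ≠ 0) : qbinom q m m = 1 := by
  rw [qbinom, Nat.sub_self, qfact_zero, one_mul, div_self hm]

lemma qbinom_succ_succ {q : ℂ} {m n : ℕ} (hm : qfact q m ≠ 0) (hnm : n < m) :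
    qbinom q (m + 1) (n + 1) =
      q ^ (n + 1) * qbinom q m (n + 1) + q⁻¹ ^ (m - n) * qbinom q m n := by
  obtain ⟨a, rfl⟩ : ∃ a, m = n + 1 + a := ⟨m - (n + 1), by omega⟩
  have hfa := qfact_ne_zero_of_le hm (m := n + 1 + a) (n := a) (by omega)
  have hfn := qfact_ne_zero_of_le hm (m := n + 1 + a) (n := n) (by omega)
  have hia := qint_ne_zero_of_le hm (k := a) (by omega)
  have hin := qint_ne_zero_of_le hm (k := n) (by omega)
  have hsplit : qint q (n + 1 + a + 1) =
      q ^ (n + 1) * qint q (a + 1) + q⁻¹ ^ (a + 1) * qint q (n + 1) := by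
    rw [← qint_add, add_comm (a + 1), ← add_assoc]
  simp only [qbinom, show n + 1 + a + 1 - (n + 1) = a + 1 by omega,
    show n + 1 + a - (n + 1) = a by omega, show n + 1 + a - n = a + 1 by omega,
    qfact_succ q (n + 1 + a), qfact_succ q a, qfact_succ q n, hsplit]
  field_simp

def subsetSumGF {R : Type*} [CommSemiring R] (x : R) (m n : ℕ) : R :=
  ∑ S ∈ (range m).powersetCard n, x ^ ∑ i ∈ S, (i + 1)

section subsetSumGF

variable {R : Type*} [CommSemiring R] (x : R)

lemma subsetSumGF_zero_right (m : ℕ) : subsetSumGF x m 0 = 1 := by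
  simp [subsetSumGF]

lemma subsetSumGF_of_lt {m n : ℕ} (h : m < n) : subsetSumGF x m n = 0 := by
  rw [subsetSumGF, powersetCard_eq_empty.2 (by simpa using h), sum_empty]

lemma subsetSumGF_succ_succ (m n : ℕ) :
    subsetSumGF x (m + 1) (n + 1) =
      subsetSumGF x m (n + 1) + x ^ (m + 1) * subsetSumGF x m n := by
  have hm : ∀ S ∈ (range m).powersetCard n, m ∉ S := fun S hS hmS =>
    notMem_range_self ((mem_powersetCard.1 hS).1 hmS)
  rw [subsetSumGF, range_add_one, powersetCard_succ_insert notMem_range_self, sum_union,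
    sum_image]
  · rw [subsetSumGF, subsetSumGF, mul_sum]
    refine congrArg _ (sum_congr rfl fun S hS => ?_)
    rw [sum_insert (hm S hS), pow_add]
  · intro S hS T hT hST
    rw [← erase_insert (hm S hS), hST, erase_insert (hm T hT)]
  · refine disjoint_left.2 fun S hS hS' => ?_
    obtain ⟨T, -, rfl⟩ := mem_image.1 hS'
    exact notMem_range_self ((mem_powersetCard.1 hS).1 (mem_insert_self m T))

lemma subsetSumGF_eq_sum_powersetCard_univ (m n : ℕ) :
    subsetSumGF x m n =
      ∑ S ∈ (univ : Finset (Fin m)).powersetCard n, x ^ ∑ i ∈ S, ((i : ℕ) + 1) := by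
  rw [subsetSumGF, ← Nat.Iio_eq_range, ← Fin.map_valEmbedding_univ, powersetCard_map, sum_map]
  refine sum_congr rfl fun S _ => ?_
  rw [RelEmbedding.coe_toEmbedding, mapEmbedding_apply, sum_map, Fin.valEmbedding_apply]

end subsetSumGF

lemma pow_mul_subsetSumGF_succ_succ {q : ℂ} (hq0 : q ≠ 0) {m n : ℕ} (hn : n ≤ m) :
    q ^ ((n + 1) * (m + 1 + 1)) * subsetSumGF (q⁻¹ ^ 2) (m + 1) (n + 1) =
      q ^ (n + 1) * (q ^ ((n + 1) * (m + 1)) * subsetSumGF (q⁻¹ ^ 2) m (n + 1)) +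
        q⁻¹ ^ (m - n) * (q ^ (n * (m + 1)) * subsetSumGF (q⁻¹ ^ 2) m n) := by
  obtain ⟨a, rfl⟩ := Nat.exists_eq_add_of_le hn
  rw [subsetSumGF_succ_succ, Nat.add_sub_cancel_left]
  simp only [inv_pow]
  field_simp
  ring

theorem qbinom_eq_pow_mul_subsetSumGF {q : ℂ} (hq0 : q ≠ 0) {m n : ℕ} (hm : qfact q m ≠ 0)
    (hn : n ≤ m) : qbinom q m n = q ^ (n * (m + 1)) * subsetSumGF (q⁻¹ ^ 2) m n := by
  induction m generalizing n with
  | zero => rw [Nat.le_zero.1 hn, qbinom_zero_right hm, subsetSumGF_zero_right]; simp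
  | succ m ih =>
    cases n with
    | zero => rw [qbinom_zero_right hm, subsetSumGF_zero_right]; simp
    | succ n =>
      have hm' : qfact q m ≠ 0 := qfact_ne_zero_of_le hm m.le_succ
      rw [pow_mul_subsetSumGF_succ_succ hq0 (by omega)]
      rcases (Nat.succ_le_succ_iff.1 hn).lt_or_eq with h | rfl
      · rw [qbinom_succ_succ hm' h, ← ih hm' h, ← ih hm' h.le]
      · rw [subsetSumGF_of_lt _ (lt_add_one n), mul_zero, mul_zero, zero_add, Nat.sub_self,
          pow_zero, one_mul, ← ih hm' le_rfl, qbinom_self hm', qbinom_self hm]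

def oneSetEquiv (m : ℕ) : (Fin m → Fin 2) ≃ Finset (Fin m) where
  toFun := oneSet
  invFun S i := if i ∈ S then 1 else 0
  left_inv c := by
    funext i
    have : c i = 0 ∨ c i = 1 := by omega
    rcases this with h | h <;> simp [oneSet, h]
  right_inv S := by
    ext i
    by_cases h : i ∈ S <;> simp [oneSet, h]

lemma sum_ite_card_oneSet (m n : ℕ) (f : Finset (Fin m) → ℂ) :
    ∑ c : Fin m → Fin 2, (if (oneSet c).card = n then f (oneSet c) else 0) =
      ∑ S ∈ (univ : Finset (Fin m)).powersetCard n, f S := by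
  rw [← univ_filter_card_eq, sum_filter]
  exact (oneSetEquiv m).sum_comp fun S => if S.card = n then f S else 0

lemma two_mul_expKet (m n : ℕ) (S : Finset (Fin m)) :
    2 * expKet m n S = 2 * ∑ i ∈ S, ((i : ℤ) + 1) - 2 * n * m + n * (n - 1) := by
  have h := Nat.two_mul_div_two_of_even (Nat.even_mul_pred_self n)
  rcases n with _ | n
  · simp [expKet]
  · simp only [expKet, Nat.add_sub_cancel] at h ⊢
    have h' : (2 : ℤ) * ((n + 1) * n / 2 : ℕ) = (n + 1) * n := by exact_mod_cast h
    simp only [Nat.cast_add, Nat.cast_one]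
    linear_combination h'

lemma zpow_neg_expKet_sq {q : ℂ} (hq0 : q ≠ 0) (m n : ℕ) (S : Finset (Fin m)) :
    q ^ (-((n : ℤ) * ((m : ℤ) - (n : ℤ)))) * (q ^ (-expKet m n S)) ^ 2 =
      q ^ (n * (m + 1)) * (q⁻¹ ^ 2) ^ ∑ i ∈ S, ((i : ℕ) + 1) := by
  have hexp : -((n : ℤ) * ((m : ℤ) - (n : ℤ))) + -expKet m n S * 2 =
      ((n * (m + 1) : ℕ) : ℤ) - ((2 * ∑ i ∈ S, ((i : ℕ) + 1) : ℕ) : ℤ) := by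
    push_cast
    linear_combination -(two_mul_expKet m n S)
  rw [← zpow_natCast (q ^ _), ← _root_.zpow_mul, Nat.cast_ofNat, ← zpow_add₀ hq0, hexp,
    zpow_sub₀ hq0, zpow_natCast, zpow_natCast, ← pow_mul, inv_pow, div_eq_mul_inv]

lemma braCoef_mul_tketCoef_of_ne (q : ℂ) (m : ℕ) {k n : ℕ} (h : k ≠ n) (c : Fin m → Fin 2) :
    braCoef q m k c * tketCoef q m n c = 0 := by
  unfold braCoef tketCoef ketCoef
  split_ifs with hk hn
  · exact absurd (hk.symm.trans hn) h
  all_goals simp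

lemma braCoef_mul_tketCoef_self {q : ℂ} (hq0 : q ≠ 0) {m n : ℕ} (hb : qbinom q m n ≠ 0)
    (c : Fin m → Fin 2) :
    braCoef q m n c * tketCoef q m n c =
      if (oneSet c).card = n then ((m.choose n : ℂ))⁻¹ else 0 := by
  unfold braCoef tketCoef ketCoef
  split_ifs
  · have := zpow_ne_zero ((n : ℤ) * ((m : ℤ) - (n : ℤ))) hq0
    have := zpow_ne_zero (expKet m n (oneSet c)) hq0
    rw [_root_.zpow_neg, _root_.zpow_neg]
    field_simp
  · simp

lemma tbraCoef_mul_tketCoef {q : ℂ} (hq0 : q ≠ 0) (m n : ℕ) (c : Fin m → Fin 2) :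
    tbraCoef q m n c * tketCoef q m n c =
      if (oneSet c).card = n then
        qbinom q m n / (m.choose n : ℂ) ^ 2 *
          (q ^ (n * (m + 1)) * (q⁻¹ ^ 2) ^ ∑ i ∈ oneSet c, ((i : ℕ) + 1))
      else 0 := by
  unfold tbraCoef tketCoef
  split_ifs
  · rw [← zpow_neg_expKet_sq hq0]
    ring
  · simp

/-- Duality of the bras and the tilde kets, and the normalization of the
tilde vectors. -/
theorem statement9 (q : ℂ) (hq0 : q ≠ 0) (m : ℕ)
    (hq : ∀ k : ℕ, 1 ≤ k → k ≤ m → q ^ (2 * k) ≠ 1) :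
    (∀ mm nn : ℕ, mm ≤ m → nn ≤ m →
      ∑ c : Fin m → Fin 2, braCoef q m mm c * tketCoef q m nn c =
        if mm = nn then 1 else 0) ∧
    (∀ nn : ℕ, nn ≤ m →
      ∑ c : Fin m → Fin 2, tbraCoef q m nn c * tketCoef q m nn c =
        (qbinom q m nn / (m.choose nn : ℂ)) ^ 2) := by
  have hqf : qfact q m ≠ 0 := qfact_ne_zero hq0 hq
  refine ⟨fun k n hk _ => ?_, fun n hn => ?_⟩
  · split_ifs with h
    · subst h
      simp_rw [braCoef_mul_tketCoef_self hq0 (qbinom_ne_zero hqf hk)]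
      rw [sum_ite_card_oneSet m k fun _ => _, sum_const, card_powersetCard, card_univ,
        Fintype.card_fin, nsmul_eq_mul]
      exact mul_inv_cancel₀ (Nat.cast_ne_zero.2 (Nat.choose_pos hk).ne')
    · exact sum_eq_zero fun c _ => braCoef_mul_tketCoef_of_ne q m h c
  · simp_rw [tbraCoef_mul_tketCoef hq0]
    rw [sum_ite_card_oneSet m n fun S =>
        qbinom q m n / (m.choose n : ℂ) ^ 2 *
          (q ^ (n * (m + 1)) * (q⁻¹ ^ 2) ^ ∑ i ∈ S, ((i : ℕ) + 1)),
      ← mul_sum, ← mul_sum, ← subsetSumGF_eq_sum_powersetCard_univ,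
      ← qbinom_eq_pow_mul_subsetSumGF hq0 hqf hn]
    ring
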